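/- Let G be a group with an automatic structure L₁ ⊆ A* for π₁ : A* → G and a factorial biautomatic structure L₂ ⊆ B* for π₂ : B* → G admitting a departure function. Let φ be an endomorphism of G for which there exists N ∈ ℕ such that for every α ∈ L₁, every x ∈ G, and every β ∈ L₂ with βπ₂ = (απ₁)φ, each point of the set {(x·(α^[n]π₁))φ : n ∈ ℕ} lies within d_B-distance N of the set {(xφ)·(β^[m]π₂) : m ∈ ℕ}. Then the FT-BRP holds for (φ, L₁, L₂). -/
import Mathlib


open scoped NNReal

namespace Auto

/-- The generating set `Aπ ∪ (Aπ)⁻¹` of `G` determined by `π : A* → G`. -/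
def gens {A G : Type*} [Group G] (π : FreeMonoid A →* G) : Set G :=
  (Set.range fun a : A => π (FreeMonoid.of a)) ∪
    Set.range fun a : A => (π (FreeMonoid.of a))⁻¹

/-- The word metric `d_A` on `G`: the least `n` such that `g⁻¹h` is a product of `n`
elements of `Aπ ∪ (Aπ)⁻¹`. -/
noncomputable def wdist {A G : Type*} [Group G] (π : FreeMonoid A →* G) (g h : G) : ℕ :=
  sInf {n : ℕ | ∃ l : List G, l.length = n ∧ (∀ x ∈ l, x ∈ gens π) ∧ l.prod = g⁻¹ * h}

/-- Evaluation of a word of `A*` in `G`. -/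
def evalW {A G : Type*} [Group G] (π : FreeMonoid A →* G) (w : List A) : G :=
  π (FreeMonoid.ofList w)

/-- `u` and `v` `p`-fellow travel: `d_A(u^[n]π, v^[n]π) ≤ p` for all `n`. -/
def FellowTravel {A G : Type*} [Group G] (π : FreeMonoid A →* G) (p : ℝ≥0)
    (u v : List A) : Prop :=
  ∀ n : ℕ, (wdist π (evalW π (u.take n)) (evalW π (v.take n)) : ℝ≥0) ≤ p

/-- `u` and `v` are `p`-meeting-fellow-travellers. -/
def MFT {A G : Type*} [Group G] (π : FreeMonoid A →* G) (p : ℝ≥0) (u v : List A) : Prop :=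
  FellowTravel π p u v ∧ evalW π u = evalW π v

/-- A language is regular if it is accepted by a finite-state automaton. -/
def IsRegular {A : Type*} (L : Language A) : Prop :=
  ∃ (σ : Type) (_ : Fintype σ) (M : DFA A σ), M.accepts = L

/-- `L` is an automatic structure for `π`. -/
structure IsAutomaticStructure {A G : Type*} [Group G] (π : FreeMonoid A →* G)
    (L : Language A) : Prop where
  regular : IsRegular L
  onto : ∀ g : G, ∃ w ∈ L, evalW π w = g
  ft : ∃ N : ℕ, ∀ u ∈ L, ∀ v ∈ L,
    wdist π (evalW π u) (evalW π v) ≤ 1 → FellowTravel π N u v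

/-- Evaluation of an element of `A ∪ {ε}`. -/
def evalOpt {A G : Type*} [Group G] (π : FreeMonoid A →* G) : Option A → G
  | none => 1
  | some a => π (FreeMonoid.of a)

/-- `L` is a biautomatic structure for `π`. -/
structure IsBiautomaticStructure {A G : Type*} [Group G] (π : FreeMonoid A →* G)
    (L : Language A) extends IsAutomaticStructure π L : Prop where
  bi : ∃ N : ℕ, ∀ u ∈ L, ∀ v ∈ L, ∀ a : Option A,
    evalW π v = evalOpt π a * evalW π u →
    ∀ n : ℕ, wdist π (evalOpt π a * evalW π (u.take n)) (evalW π (v.take n)) ≤ N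

/-- A language is factorial if it is closed under taking factors. -/
def IsFactorial {A : Type*} (L : Language A) : Prop :=
  ∀ u ∈ L, ∀ v : List A, v <:+: u → v ∈ L

/-- `D : ℝ≥0 → ℝ≥0` is a departure function for `(G, L)`. -/
def IsDepartureFunction {A G : Type*} [Group G] (π : FreeMonoid A →* G) (L : Language A)
    (D : ℝ≥0 → ℝ≥0) : Prop :=
  ∀ w ∈ L, ∀ r : ℝ≥0, ∀ s t : ℕ, D r ≤ (t : ℝ≥0) → s + t ≤ w.length →
    r < (wdist π (evalW π (w.take s)) (evalW π (w.take (s + t))) : ℝ≥0)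

/-- Every point of `S` is within distance `N` of `T`. -/
def NbhdIn {A G : Type*} [Group G] (π : FreeMonoid A →* G) (N : ℕ) (S T : Set G) : Prop :=
  ∀ s ∈ S, ∃ t ∈ T, wdist π s t ≤ N

/-- The Hausdorff distance between `S` and `T` is at most `N`. -/
def HausdorffLE {A G : Type*} [Group G] (π : FreeMonoid A →* G) (N : ℕ)
    (S T : Set G) : Prop :=
  NbhdIn π N S T ∧ NbhdIn π N T S

/-- `H` is an `L`-quasiconvex subgroup of `G`. -/
def IsQuasiconvex {A G : Type*} [Group G] (π : FreeMonoid A →* G) (L : Language A)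
    (H : Subgroup G) : Prop :=
  ∃ k : ℕ, ∀ h ∈ H, ∀ h' ∈ H, ∀ w ∈ L, h * evalW π w = h' →
    ∀ n : ℕ, ∃ z ∈ H, wdist π (h * evalW π (w.take n)) z ≤ k

/-- The bounded reduction property for `(φ, L, L')`. -/
def BRP {A B G G' : Type*} [Group G] [Group G'] (π : FreeMonoid A →* G)
    (π' : FreeMonoid B →* G') (φ : G →* G') (L : Language A) (L' : Language B) : Prop :=
  ∃ N : ℕ, ∀ x : G, ∀ α ∈ L, ∀ β ∈ L', evalW π' β = φ (evalW π α) →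
    HausdorffLE π' N (Set.range fun n : ℕ => φ (x * evalW π (α.take n)))
      (Set.range fun n : ℕ => φ x * evalW π' (β.take n))

/-- The synchronous bounded reduction property for `(φ, L, L')`. -/
def SyncBRP {A B G G' : Type*} [Group G] [Group G'] (π : FreeMonoid A →* G)
    (π' : FreeMonoid B →* G') (φ : G →* G') (L : Language A) (L' : Language B) : Prop :=
  ∃ N : ℕ, ∀ x : G, ∀ α ∈ L, ∀ β ∈ L', evalW π' β = φ (evalW π α) →
    ∀ n : ℕ, wdist π' (φ (x * evalW π (α.take n))) (φ x * evalW π' (β.take n)) ≤ N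

/-- The fellow traveller bounded reduction property (FT-BRP) for `(φ, L, L')`. -/
def FTBRP {A B G G' : Type*} [Group G] [Group G'] (π : FreeMonoid A →* G)
    (π' : FreeMonoid B →* G') (φ : G →* G') (L : Language A) (L' : Language B) : Prop :=
  ∀ p : ℝ≥0, ∃ q : ℝ≥0,
    ∀ u₁ ∈ L, ∀ u₂ ∈ L, ∀ u₃ ∈ L, ∀ u₁' ∈ L', ∀ u₂' ∈ L', ∀ u₃' ∈ L',
      evalW π' u₁' = φ (evalW π u₁) → evalW π' u₂' = φ (evalW π u₂) →
        evalW π' u₃' = φ (evalW π u₃) →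
          MFT π p (u₁ ++ u₂) u₃ → MFT π' q (u₁' ++ u₂') u₃'

/-- The natural homomorphism `(A ⊔ B)* → G` agreeing with `π₁` on `A` and `π₂` on `B`. -/
def sumHom {A B G : Type*} [Group G] (π₁ : FreeMonoid A →* G) (π₂ : FreeMonoid B →* G) :
    FreeMonoid (A ⊕ B) →* G :=
  FreeMonoid.lift (Sum.elim (fun a => π₁ (FreeMonoid.of a)) fun b => π₂ (FreeMonoid.of b))

/-- The union `L₁ ∪ L₂` viewed as a language over `A ⊔ B`. -/
def unionLang {A B : Type*} (L₁ : Language A) (L₂ : Language B) : Language (A ⊕ B) :=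
  {w : List (A ⊕ B) | (∃ u ∈ L₁, w = u.map Sum.inl) ∨ ∃ v ∈ L₂, w = v.map Sum.inr}

/-- `L` is an asynchronous automatic structure for `π`. -/
def IsAsyncAutomaticStructure {A G : Type*} [Group G] (π : FreeMonoid A →* G)
    (L : Language A) : Prop :=
  IsRegular L ∧ (∀ g : G, ∃ w ∈ L, evalW π w = g) ∧
    ∃ p : ℕ, ∀ u ∈ L, ∀ v ∈ L, wdist π (evalW π u) (evalW π v) ≤ 1 →
      ∃ φ ψ : ℕ → ℕ, Monotone φ ∧ Monotone ψ ∧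
        Function.Surjective φ ∧ Function.Surjective ψ ∧
          ∀ t : ℕ, wdist π (evalW π (u.take (φ t))) (evalW π (v.take (ψ t))) ≤ p

/-- `L₁` and `L₂` are equivalent automatic structures. -/
def LangEquivalent {A B G : Type*} [Group G] (π₁ : FreeMonoid A →* G)
    (π₂ : FreeMonoid B →* G) (L₁ : Language A) (L₂ : Language B) : Prop :=
  IsAsyncAutomaticStructure (sumHom π₁ π₂) (unionLang L₁ L₂)

/-- `L₁` and `L₂` are synchronously equivalent automatic structures. -/
def LangSyncEquivalent {A B G : Type*} [Group G] (π₁ : FreeMonoid A →* G)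
    (π₂ : FreeMonoid B →* G) (L₁ : Language A) (L₂ : Language B) : Prop :=
  IsAutomaticStructure (sumHom π₁ π₂) (unionLang L₁ L₂)

/-- `L` has the Hausdorff closeness property. -/
def HausClose {A G : Type*} [Group G] (π : FreeMonoid A →* G) (L : Language A) : Prop :=
  ∃ N : ℕ, ∀ u ∈ L, ∀ v ∈ L, wdist π (evalW π u) (evalW π v) ≤ 1 →
    HausdorffLE π N (Set.range fun n : ℕ => evalW π (u.take n))
      (Set.range fun n : ℕ => evalW π (v.take n))

/-- The padded alphabet `C = (A×B) ∪ (A×{$}) ∪ ({$}×B)` of convolution. -/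
abbrev ConvAlphabet (A B : Type*) := (A × B) ⊕ (A ⊕ B)

/-- The convolution `u ⋄ v` of two words. -/
def conv {A B : Type*} : List A → List B → List (ConvAlphabet A B)
  | [], [] => []
  | [], b :: v => Sum.inr (Sum.inr b) :: conv [] v
  | a :: u, [] => Sum.inr (Sum.inl a) :: conv u []
  | a :: u, b :: v => Sum.inl (a, b) :: conv u v
  termination_by u v => u.length + v.length

/-- The convolution `L₁ ⋄ L₂` of two languages. -/
def convLang {A B : Type*} (L₁ : Language A) (L₂ : Language B) :
    Language (ConvAlphabet A B) :=
  {w : List (ConvAlphabet A B) | ∃ u ∈ L₁, ∃ v ∈ L₂, w = conv u v}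

/-- The natural homomorphism `C* → G × G'` for the convolution alphabet. -/
def convHom {A B G G' : Type*} [Group G] [Group G'] (π₁ : FreeMonoid A →* G)
    (π₂ : FreeMonoid B →* G') : FreeMonoid (ConvAlphabet A B) →* G × G' :=
  FreeMonoid.lift fun c =>
    match c with
    | Sum.inl (a, b) => (π₁ (FreeMonoid.of a), π₂ (FreeMonoid.of b))
    | Sum.inr (Sum.inl a) => (π₁ (FreeMonoid.of a), 1)
    | Sum.inr (Sum.inr b) => (1, π₂ (FreeMonoid.of b))

/-- A group is automatic if it admits an automatic structure over some finite alphabet. -/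
def IsAutomaticGroup (G : Type*) [Group G] : Prop :=
  ∃ (A : Type) (_ : Fintype A) (π : FreeMonoid A →* G) (L : Language A),
    IsAutomaticStructure π L


section WordMetric

variable {A G : Type*} [Group G] (π : FreeMonoid A →* G)

theorem evalW_append (u v : List A) : evalW π (u ++ v) = evalW π u * evalW π v := by
  simp [evalW, FreeMonoid.ofList_append]

theorem evalW_nil : evalW π ([] : List A) = 1 := by simp [evalW]

theorem evalW_eq_prod (u : List A) :
    evalW π u = (u.map fun a => π (FreeMonoid.of a)).prod := by
  induction u with
  | nil => simp [evalW_nil]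
  | cons a t ih =>
      have h : (a :: t) = [a] ++ t := rfl
      rw [h, evalW_append]
      simp [ih]
      rfl

theorem gens_inv {x : G} (hx : x ∈ gens π) : x⁻¹ ∈ gens π := by
  rcases hx with ⟨a, rfl⟩ | ⟨a, rfl⟩
  · exact Or.inr ⟨a, rfl⟩
  · exact Or.inl ⟨a, by simp⟩

/-- The defining set for wdist. -/
def wset (g h : G) : Set ℕ :=
  {n : ℕ | ∃ l : List G, l.length = n ∧ (∀ x ∈ l, x ∈ gens π) ∧ l.prod = g⁻¹ * h}

theorem wset_nonempty (onto : ∀ g : G, ∃ w, evalW π w = g) (g h : G) :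
    (wset π g h).Nonempty := by
  obtain ⟨w, hw⟩ := onto (g⁻¹ * h)
  exact ⟨w.length, w.map fun a => π (FreeMonoid.of a), by simp,
    by rintro x hx; simp at hx; obtain ⟨a, _, rfl⟩ := hx; exact Or.inl ⟨a, rfl⟩,
    by rw [← evalW_eq_prod, hw]⟩

theorem wdist_le {g h : G} {l : List G} (hg : ∀ x ∈ l, x ∈ gens π)
    (hp : l.prod = g⁻¹ * h) : wdist π g h ≤ l.length :=
  Nat.sInf_le ⟨l, rfl, hg, hp⟩

theorem wdist_exists (onto : ∀ g : G, ∃ w, evalW π w = g) (g h : G) :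
    ∃ l : List G, l.length = wdist π g h ∧ (∀ x ∈ l, x ∈ gens π) ∧ l.prod = g⁻¹ * h :=
  Nat.sInf_mem (wset_nonempty π onto g h)

theorem wdist_self (g : G) : wdist π g g = 0 :=
  Nat.le_zero.mp (wdist_le π (l := []) (by simp) (by simp))

theorem wdist_left_inv (x g h : G) : wdist π (x * g) (x * h) = wdist π g h := by
  unfold wdist
  congr 1
  ext n
  simp [mul_assoc, mul_inv_rev]

theorem wdist_mul_right (g x : G) : wdist π g (g * x) = wdist π 1 x := by
  rw [← wdist_left_inv π g 1 x, mul_one]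

theorem wdist_symm (onto : ∀ g : G, ∃ w, evalW π w = g) (g h : G) :
    wdist π g h = wdist π h g := by
  have key : ∀ g h : G, wdist π g h ≤ wdist π h g := by
    intro g h
    obtain ⟨l, hl, hg, hp⟩ := wdist_exists π onto h g
    refine le_trans (wdist_le π (l := (l.map (·⁻¹)).reverse) ?_ ?_) ?_
    · intro x hx
      simp only [List.mem_reverse, List.mem_map] at hx
      obtain ⟨a, ha, rfl⟩ := hx
      exact gens_inv π (hg a ha)
    · rw [← List.prod_inv_reverse, hp]; simp
    · simp [hl]
  exact le_antisymm (key g h) (key h g)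

theorem wdist_one_inv (onto : ∀ g : G, ∃ w, evalW π w = g) (x : G) :
    wdist π 1 x⁻¹ = wdist π 1 x := by
  rw [← wdist_left_inv π x 1 x⁻¹, mul_one, mul_inv_cancel, wdist_symm π onto]

theorem wdist_triangle (onto : ∀ g : G, ∃ w, evalW π w = g) (g h k : G) :
    wdist π g k ≤ wdist π g h + wdist π h k := by
  obtain ⟨l1, hl1, hg1, hp1⟩ := wdist_exists π onto g h
  obtain ⟨l2, hl2, hg2, hp2⟩ := wdist_exists π onto h k
  refine le_trans (wdist_le π (l := l1 ++ l2) ?_ ?_) ?_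
  · intro x hx; rcases List.mem_append.mp hx with h' | h'
    · exact hg1 x h'
    · exact hg2 x h'
  · rw [List.prod_append, hp1, hp2]; group
  · simp [hl1, hl2]

theorem wdist_one_evalW (u : List A) : wdist π 1 (evalW π u) ≤ u.length := by
  refine le_trans (wdist_le π (l := u.map fun a => π (FreeMonoid.of a)) ?_ ?_) (by simp)
  · rintro x hx; simp at hx; obtain ⟨a, _, rfl⟩ := hx; exact Or.inl ⟨a, rfl⟩
  · rw [← evalW_eq_prod]; simp

theorem wdist_take_le (w : List A) {c d : ℕ} (hcd : c ≤ d) :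
    wdist π (evalW π (w.take c)) (evalW π (w.take d)) ≤ d - c := by
  have h1 : w.take d = w.take c ++ (w.drop c).take (d - c) := by
    rw [← List.take_add, Nat.add_sub_cancel' hcd]
  rw [h1, evalW_append]
  calc wdist π (evalW π (w.take c)) (evalW π (w.take c) * evalW π ((w.drop c).take (d - c)))
      = wdist π 1 (evalW π ((w.drop c).take (d - c))) := by
        rw [← wdist_left_inv π (evalW π (w.take c)) 1]; simp
    _ ≤ ((w.drop c).take (d - c)).length := wdist_one_evalW π _
    _ ≤ d - c := by simp

theorem wdist_one_le_one {x : G} (hx : x ∈ gens π) : wdist π 1 x ≤ 1 :=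
  wdist_le π (l := [x]) (by simpa using hx) (by simp)

end WordMetric

section Chains

variable {B G : Type*} [Group G] {π : FreeMonoid B →* G} {L : Language B}

/-- Chained fellow-travelling from the automatic structure property. -/
theorem ft_chain (ontoL : ∀ g : G, ∃ w ∈ L, evalW π w = g) {Nft : ℕ}
    (hft : ∀ u ∈ L, ∀ v ∈ L, wdist π (evalW π u) (evalW π v) ≤ 1 →
      FellowTravel π (Nft : ℝ≥0) u v) :
    ∀ l : List G, (∀ x ∈ l, x ∈ gens π) → ∀ u, u ∈ L → ∀ v, v ∈ L →
      evalW π u * l.prod = evalW π v →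
      ∀ n, wdist π (evalW π (u.take n)) (evalW π (v.take n)) ≤ (l.length + 1) * Nft := by
  have onto : ∀ g : G, ∃ w, evalW π w = g := fun g => (ontoL g).imp fun w hw => hw.2
  intro l
  induction l with
  | nil =>
      intro _ u hu v hv hp n
      have h0 : wdist π (evalW π u) (evalW π v) ≤ 1 := by
        simp only [List.prod_nil, mul_one] at hp
        rw [hp, wdist_self]
        omega
      have := hft u hu v hv h0 n
      simp only [List.length_nil, zero_add, one_mul]
      exact_mod_cast this
  | cons x l ih =>
      intro hgens u hu v hv hp n
      obtain ⟨z, hzL, hz⟩ := ontoL (evalW π u * x)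
      have hx : x ∈ gens π := hgens x (by simp)
      have h1 : wdist π (evalW π u) (evalW π z) ≤ 1 := by
        rw [hz, wdist_mul_right]
        exact wdist_one_le_one π hx
      have hft1 := hft u hu z hzL h1 n
      have hft1' : wdist π (evalW π (u.take n)) (evalW π (z.take n)) ≤ Nft := by
        exact_mod_cast hft1
      have hrec := ih (fun y hy => hgens y (by simp [hy])) z hzL v hv
        (by rw [List.prod_cons] at hp; rw [hz, ← hp]; group) n
      calc wdist π (evalW π (u.take n)) (evalW π (v.take n))
          ≤ wdist π (evalW π (u.take n)) (evalW π (z.take n)) +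
            wdist π (evalW π (z.take n)) (evalW π (v.take n)) :=
            wdist_triangle π onto _ _ _
        _ ≤ Nft + (l.length + 1) * Nft := Nat.add_le_add hft1' hrec
        _ ≤ ((x :: l).length + 1) * Nft := by simp [List.length_cons]; ring_nf; omega

/-- Chained translated fellow-travelling from the biautomatic structure property. -/
theorem bi_chain (ontoL : ∀ g : G, ∃ w ∈ L, evalW π w = g) {Nbi : ℕ}
    (hbi : ∀ u ∈ L, ∀ v ∈ L, ∀ a : Option B, evalW π v = evalOpt π a * evalW π u →
      ∀ n, wdist π (evalOpt π a * evalW π (u.take n)) (evalW π (v.take n)) ≤ Nbi) :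
    ∀ l : List G, (∀ x ∈ l, x ∈ gens π) → ∀ u, u ∈ L → ∀ v, v ∈ L →
      evalW π v = l.prod * evalW π u →
      ∀ n, wdist π (l.prod * evalW π (u.take n)) (evalW π (v.take n)) ≤
        (l.length + 1) * Nbi := by
  have onto : ∀ g : G, ∃ w, evalW π w = g := fun g => (ontoL g).imp fun w hw => hw.2
  intro l
  induction l with
  | nil =>
      intro _ u hu v hv hp n
      have := hbi u hu v hv none (by simpa [evalOpt] using hp) n
      simpa [evalOpt] using this
  | cons x l ih =>
      intro hgens u hu v hv hp n
      obtain ⟨z, hzL, hz⟩ := ontoL (l.prod * evalW π u)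
      have hx : x ∈ gens π := hgens x (by simp)
      have hrec := ih (fun y hy => hgens y (by simp [hy])) u hu z hzL hz n
      have hstep : wdist π (x * evalW π (z.take n)) (evalW π (v.take n)) ≤ Nbi := by
        rcases hx with ⟨b, hb⟩ | ⟨b, hb⟩
        · have hv' : evalW π v = evalOpt π (some b) * evalW π z := by
            simp only [evalOpt, hb, hz, hp, List.prod_cons]
            group
          have := hbi z hzL v hv (some b) hv' n
          simpa [evalOpt, hb] using this
        · have hz' : evalW π z = evalOpt π (some b) * evalW π v := by
            simp only [evalOpt]
            rw [hz, hp, List.prod_cons, ← hb]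
            group
          have h2 := hbi v hv z hzL (some b) hz' n
          have h3 : wdist π (x * evalW π (z.take n)) (evalW π (v.take n)) =
              wdist π (evalW π (z.take n)) (π (FreeMonoid.of b) * evalW π (v.take n)) := by
            rw [← hb, ← wdist_left_inv π (π (FreeMonoid.of b))]
            group
          rw [h3, wdist_symm π onto]
          simpa [evalOpt] using h2
      calc wdist π ((x :: l).prod * evalW π (u.take n)) (evalW π (v.take n))
          ≤ wdist π ((x :: l).prod * evalW π (u.take n)) (x * evalW π (z.take n)) +
            wdist π (x * evalW π (z.take n)) (evalW π (v.take n)) :=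
            wdist_triangle π onto _ _ _
        _ ≤ (l.length + 1) * Nbi + Nbi := by
            refine Nat.add_le_add ?_ hstep
            have : wdist π ((x :: l).prod * evalW π (u.take n)) (x * evalW π (z.take n)) =
                wdist π (l.prod * evalW π (u.take n)) (evalW π (z.take n)) := by
              rw [List.prod_cons, mul_assoc, wdist_left_inv]
            rw [this]
            exact hrec
        _ ≤ ((x :: l).length + 1) * Nbi := by simp [List.length_cons]; ring_nf; omega

end Chains

section Dep

variable {B G : Type*} [Group G] {π : FreeMonoid B →* G} {L : Language B}

/-- Parameter-gap extraction from a departure function. -/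
theorem dep_gap {D : ℝ≥0 → ℝ≥0} (hD : IsDepartureFunction π L D) {w : List B} (hw : w ∈ L)
    {s t : ℕ} (hst : s + t ≤ w.length) (r : ℝ≥0)
    (hd : (wdist π (evalW π (w.take s)) (evalW π (w.take (s + t))) : ℝ≥0) ≤ r) :
    t ≤ ⌈D r⌉₊ := by
  by_contra hcon
  push_neg at hcon
  have h1 : D r ≤ (t : ℝ≥0) := le_trans (Nat.le_ceil _) (by exact_mod_cast hcon.le)
  exact absurd hd (not_le.mpr (hD w hw r s t h1 hst))

end Dep

section Lip

variable {A B G : Type*} [Group G] [Fintype A]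
  (π₁ : FreeMonoid A →* G) (π₂ : FreeMonoid B →* G)

/-- `φ` is Lipschitz from `d_A` to `d_B`. -/
theorem phi_lip (onto₁ : ∀ g : G, ∃ w, evalW π₁ w = g)
    (onto₂ : ∀ g : G, ∃ w, evalW π₂ w = g) (φ : G →* G) :
    ∃ M : ℕ, ∀ g h : G, wdist π₂ (φ g) (φ h) ≤ M * wdist π₁ g h := by
  classical
  refine ⟨Finset.univ.sup fun a : A => wdist π₂ 1 (φ (π₁ (FreeMonoid.of a))), ?_⟩
  set M := Finset.univ.sup fun a : A => wdist π₂ 1 (φ (π₁ (FreeMonoid.of a))) with hM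
  have hgen : ∀ x ∈ gens π₁, wdist π₂ 1 (φ x) ≤ M := by
    rintro x (⟨a, rfl⟩ | ⟨a, rfl⟩)
    · exact Finset.le_sup (f := fun a : A => wdist π₂ 1 (φ (π₁ (FreeMonoid.of a))))
        (Finset.mem_univ a)
    · have e1 : wdist π₂ 1 (φ (π₁ (FreeMonoid.of a))⁻¹) =
          wdist π₂ 1 (φ (π₁ (FreeMonoid.of a))) := by
        rw [map_inv, ← wdist_left_inv π₂ (φ (π₁ (FreeMonoid.of a))) 1
          (φ (π₁ (FreeMonoid.of a)))⁻¹, mul_one, mul_inv_cancel, wdist_symm π₂ onto₂]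
      rw [e1]
      exact Finset.le_sup (f := fun a : A => wdist π₂ 1 (φ (π₁ (FreeMonoid.of a))))
        (Finset.mem_univ a)
  have key : ∀ l : List G, (∀ x ∈ l, x ∈ gens π₁) → wdist π₂ 1 (φ l.prod) ≤ M * l.length := by
    intro l
    induction l with
    | nil => intro _; simp [wdist_self]
    | cons x l ih =>
        intro hg
        have h1 : wdist π₂ 1 (φ (x :: l).prod) ≤
            wdist π₂ 1 (φ x) + wdist π₂ (φ x) (φ x * φ l.prod) := by
          have := wdist_triangle π₂ onto₂ 1 (φ x) (φ x * φ l.prod)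
          simpa [List.prod_cons, map_mul] using this
        have h2 : wdist π₂ (φ x) (φ x * φ l.prod) = wdist π₂ 1 (φ l.prod) :=
          wdist_mul_right π₂ _ _
        calc wdist π₂ 1 (φ (x :: l).prod)
            ≤ wdist π₂ 1 (φ x) + wdist π₂ 1 (φ l.prod) := by rw [← h2]; exact h1
          _ ≤ M + M * l.length := Nat.add_le_add (hgen x (hg x (by simp)))
              (ih fun y hy => hg y (by simp [hy]))
          _ = M * (x :: l).length := by simp [List.length_cons]; ring
  intro g h
  obtain ⟨l, hl, hg, hp⟩ := wdist_exists π₁ onto₁ g h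
  have : wdist π₂ (φ g) (φ h) = wdist π₂ 1 (φ (g⁻¹ * h)) := by
    rw [map_mul, map_inv, ← wdist_mul_right π₂ (φ g) ((φ g)⁻¹ * φ h)]
    group
  rw [this, ← hp]
  calc wdist π₂ 1 (φ l.prod) ≤ M * l.length := key l hg
    _ = M * wdist π₁ g h := by rw [hl]

end Lip


end Auto

open Auto

/-- If `L₂` is a factorial biautomatic structure admitting a departure
function and condition (C) holds for `φ`, then the FT-BRP holds for `(φ, L₁, L₂)`. -/
theorem condC_implies_ftbrp {A B G : Type*} [Fintype A] [Fintype B] [Group G]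
    (π₁ : FreeMonoid A →* G) (π₂ : FreeMonoid B →* G)
    (L₁ : Language A) (L₂ : Language B)
    (h₁ : IsAutomaticStructure π₁ L₁)
    (h₂ : IsBiautomaticStructure π₂ L₂) (hfac : IsFactorial L₂)
    (D : ℝ≥0 → ℝ≥0) (hD : IsDepartureFunction π₂ L₂ D)
    (φ : G →* G)
    (hC : ∃ N : ℕ, ∀ α ∈ L₁, ∀ x : G, ∀ β ∈ L₂,
      evalW π₂ β = φ (evalW π₁ α) → ∀ n : ℕ, ∃ m : ℕ,
        wdist π₂ (φ (x * evalW π₁ (α.take n))) (φ x * evalW π₂ (β.take m)) ≤ N) :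
    FTBRP π₁ π₂ φ L₁ L₂ := by
  classical
  obtain ⟨NC, hNC⟩ := hC
  obtain ⟨Nft, hft⟩ := h₂.ft
  obtain ⟨Nbi, hbi⟩ := h₂.bi
  have onto₁ : ∀ g : G, ∃ w, evalW π₁ w = g := fun g => (h₁.onto g).imp fun w hw => hw.2
  have onto₂ : ∀ g : G, ∃ w, evalW π₂ w = g := fun g => (h₂.onto g).imp fun w hw => hw.2
  obtain ⟨M, hM⟩ := phi_lip π₁ π₂ onto₁ onto₂ φ
  intro p
  set P := ⌊p⌋₊ with hP
  set K₃ := M * P + NC with hK₃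
  set Kft := (K₃ + 1) * Nft with hKft
  set K₄ := (K₃ + 1) * Nbi with hK₄
  set C := ⌈D ((Kft + K₃ : ℕ) : ℝ≥0)⌉₊ with hCC
  refine ⟨((Kft + K₄ + 2 * C : ℕ) : ℝ≥0), ?_⟩
  intro u₁ hu₁ u₂ hu₂ u₃ hu₃ u₁' hu₁' u₂' hu₂' u₃' hu₃' e1 e2 e3 hMFT
  obtain ⟨hFT, hEq⟩ := hMFT
  -- the endpoints agree
  have hmeet : evalW π₂ (u₁' ++ u₂') = evalW π₂ u₃' := by
    rw [evalW_append, e1, e2, ← map_mul, ← evalW_append, hEq, ← e3]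
  set a := u₁'.length with ha
  -- locate the image of the junction point on `u₃'` (the only use of condition (C))
  obtain ⟨m₀, hm₀⟩ := hNC u₃ hu₃ 1 u₃' hu₃' e3 u₁.length
  set m := min m₀ u₃'.length with hm
  have htake_m : u₃'.take m₀ = u₃'.take m := by
    rcases le_total m₀ u₃'.length with h | h
    · rw [hm, min_eq_left h]
    · rw [hm, min_eq_right h, List.take_length, List.take_of_length_le h]
  have hm_le : m ≤ u₃'.length := min_le_right _ _
  have hsyncA : wdist π₁ (evalW π₁ u₁) (evalW π₁ (u₃.take u₁.length)) ≤ P := by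
    have h0 := hFT u₁.length
    rw [List.take_left] at h0
    exact Nat.le_floor h0
  have hjunc : wdist π₂ (evalW π₂ u₁') (evalW π₂ (u₃'.take m)) ≤ K₃ := by
    have h1 : wdist π₂ (φ (evalW π₁ u₁)) (φ (evalW π₁ (u₃.take u₁.length))) ≤ M * P :=
      le_trans (hM _ _) (Nat.mul_le_mul_left M hsyncA)
    have h2 : wdist π₂ (φ (evalW π₁ (u₃.take u₁.length))) (evalW π₂ (u₃'.take m)) ≤ NC := by
      rw [← htake_m]
      simpa using hm₀
    calc wdist π₂ (evalW π₂ u₁') (evalW π₂ (u₃'.take m))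
        ≤ wdist π₂ (evalW π₂ u₁') (φ (evalW π₁ (u₃.take u₁.length))) +
          wdist π₂ (φ (evalW π₁ (u₃.take u₁.length))) (evalW π₂ (u₃'.take m)) :=
          wdist_triangle π₂ onto₂ _ _ _
      _ ≤ M * P + NC := Nat.add_le_add (by rw [e1]; exact h1) h2
  set y := u₃'.take m with hy
  set z := u₃'.drop m with hz
  have hyzL : y ++ z = u₃' := List.take_append_drop m u₃'
  have hyL : y ∈ L₂ := hfac u₃' hu₃' y ⟨[], z, by simpa using hyzL⟩
  have hzL2 : z ∈ L₂ := hfac u₃' hu₃' z ⟨y, [], by simpa using hyzL⟩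
  have hylen : y.length = m := by rw [hy, List.length_take]; omega
  -- Phase A : `u₁'` fellow travels the prefix `y` of `u₃'`
  obtain ⟨lA, hlA_len, hlA_g, hlA_p⟩ := wdist_exists π₂ onto₂ (evalW π₂ u₁') (evalW π₂ y)
  have hlA_len' : lA.length ≤ K₃ := by rw [hlA_len]; exact hjunc
  have ftA : ∀ n, wdist π₂ (evalW π₂ (u₁'.take n)) (evalW π₂ (y.take n)) ≤ Kft := by
    intro n
    have h3 := ft_chain h₂.onto hft lA hlA_g u₁' hu₁' y hyL (by rw [hlA_p]; group) n
    exact le_trans h3 (Nat.mul_le_mul_right Nft (by omega))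
  -- Phase B : the translated word `u₂'` fellow travels the suffix `z` of `u₃'`
  obtain ⟨lB, hlB_len, hlB_g, hlB_p⟩ :=
    wdist_exists π₂ onto₂ 1 (((evalW π₂ u₁')⁻¹ * evalW π₂ y)⁻¹)
  have hlB_len' : lB.length ≤ K₃ := by
    rw [hlB_len, wdist_one_inv π₂ onto₂,
      ← wdist_left_inv π₂ (evalW π₂ u₁') 1 ((evalW π₂ u₁')⁻¹ * evalW π₂ y), mul_one,
      mul_inv_cancel_left]
    exact hjunc
  have hez : evalW π₂ z = lB.prod * evalW π₂ u₂' := by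
    have h5 : evalW π₂ y * evalW π₂ z = evalW π₂ u₁' * evalW π₂ u₂' := by
      rw [← evalW_append, ← evalW_append, hyzL]
      exact hmeet.symm
    have h6 : evalW π₂ z = (evalW π₂ y)⁻¹ * (evalW π₂ u₁' * evalW π₂ u₂') := by
      rw [← h5]; group
    rw [h6, hlB_p]; group
  have biB : ∀ j, wdist π₂ (lB.prod * evalW π₂ (u₂'.take j)) (evalW π₂ (z.take j)) ≤ K₄ :=
    fun j => le_trans (bi_chain h₂.onto hbi lB hlB_g u₂' hu₂' z hzL2 hez j)
      (Nat.mul_le_mul_right Nbi (by omega))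
  have stepB : ∀ j, wdist π₂ (evalW π₂ ((u₁' ++ u₂').take (a + j)))
      (evalW π₂ (u₃'.take (m + j))) ≤ K₄ := by
    intro j
    have h6 : (u₁' ++ u₂').take (a + j) = u₁' ++ u₂'.take j := by
      rw [List.take_add, ha, List.take_left, List.drop_left]
    have h7 : u₃'.take (m + j) = y ++ z.take j := by
      rw [List.take_add, ← hy, ← hz]
    have h8 : evalW π₂ u₁' = evalW π₂ y * lB.prod := by rw [hlB_p]; group
    rw [h6, h7, evalW_append, evalW_append, h8, mul_assoc, wdist_left_inv]
    exact biB j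
  -- the parameter shift between `a` and `m` is bounded by `C`
  have hdelta1 : a ≤ m → m - a ≤ C := by
    intro ham
    have hta : u₃'.take a = y.take a := by rw [hy, List.take_take, min_eq_left ham]
    have f1 := ftA a
    rw [ha, List.take_length, ← ha] at f1
    have hd : wdist π₂ (evalW π₂ (u₃'.take a)) (evalW π₂ (u₃'.take m)) ≤ Kft + K₃ := by
      calc wdist π₂ (evalW π₂ (u₃'.take a)) (evalW π₂ (u₃'.take m))
          ≤ wdist π₂ (evalW π₂ (u₃'.take a)) (evalW π₂ u₁') +
            wdist π₂ (evalW π₂ u₁') (evalW π₂ (u₃'.take m)) := wdist_triangle π₂ onto₂ _ _ _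
        _ ≤ Kft + K₃ := Nat.add_le_add
            (by rw [hta, wdist_symm π₂ onto₂]; exact f1) hjunc
    have hgap := dep_gap hD hu₃' (s := a) (t := m - a)
      (by omega : a + (m - a) ≤ u₃'.length) ((Kft + K₃ : ℕ) : ℝ≥0)
      (by rw [Nat.add_sub_cancel' ham]; exact_mod_cast hd)
    exact hgap
  have hdelta2 : m ≤ a → a - m ≤ C := by
    intro hma
    have f1 := ftA m
    have hym : y.take m = y := by rw [← hylen, List.take_length]
    rw [hym] at f1
    have hd : wdist π₂ (evalW π₂ (u₁'.take m)) (evalW π₂ (u₁'.take (m + (a - m)))) ≤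
        Kft + K₃ := by
      have hmm : m + (a - m) = a := by omega
      rw [hmm, ha, List.take_length]
      calc wdist π₂ (evalW π₂ (u₁'.take m)) (evalW π₂ u₁')
          ≤ wdist π₂ (evalW π₂ (u₁'.take m)) (evalW π₂ y) +
            wdist π₂ (evalW π₂ y) (evalW π₂ u₁') := wdist_triangle π₂ onto₂ _ _ _
        _ ≤ Kft + K₃ := Nat.add_le_add f1
            (by rw [wdist_symm π₂ onto₂]; exact hjunc)
    exact dep_gap hD hu₁' (s := m) (t := a - m)
      (by omega : m + (a - m) ≤ u₁'.length) ((Kft + K₃ : ℕ) : ℝ≥0) (by exact_mod_cast hd)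
  -- assemble
  refine ⟨fun n => ?_, hmeet⟩
  suffices hfin : wdist π₂ (evalW π₂ ((u₁' ++ u₂').take n)) (evalW π₂ (u₃'.take n)) ≤
      Kft + K₄ + 2 * C by exact_mod_cast hfin
  by_cases hna : n ≤ a
  · by_cases hnm : n ≤ m
    · have t1 : (u₁' ++ u₂').take n = u₁'.take n := List.take_append_of_le_length (by omega)
      have t2 : u₃'.take n = y.take n := by rw [hy, List.take_take, min_eq_left hnm]
      rw [t1, t2]
      exact le_trans (ftA n) (by omega)
    · push_neg at hnm
      have b1 : wdist π₂ (evalW π₂ ((u₁' ++ u₂').take n)) (evalW π₂ ((u₁' ++ u₂').take a)) ≤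
          a - n := wdist_take_le π₂ _ hna
      have b2 : wdist π₂ (evalW π₂ ((u₁' ++ u₂').take a)) (evalW π₂ (u₃'.take m)) ≤ K₄ := by
        have := stepB 0
        simpa using this
      have b3 : wdist π₂ (evalW π₂ (u₃'.take m)) (evalW π₂ (u₃'.take n)) ≤ n - m :=
        wdist_take_le π₂ _ (by omega)
      have hc : a - m ≤ C := hdelta2 (by omega)
      calc wdist π₂ (evalW π₂ ((u₁' ++ u₂').take n)) (evalW π₂ (u₃'.take n))
          ≤ wdist π₂ (evalW π₂ ((u₁' ++ u₂').take n)) (evalW π₂ ((u₁' ++ u₂').take a)) +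
            wdist π₂ (evalW π₂ ((u₁' ++ u₂').take a)) (evalW π₂ (u₃'.take n)) :=
            wdist_triangle π₂ onto₂ _ _ _
        _ ≤ wdist π₂ (evalW π₂ ((u₁' ++ u₂').take n)) (evalW π₂ ((u₁' ++ u₂').take a)) +
            (wdist π₂ (evalW π₂ ((u₁' ++ u₂').take a)) (evalW π₂ (u₃'.take m)) +
              wdist π₂ (evalW π₂ (u₃'.take m)) (evalW π₂ (u₃'.take n))) :=
            Nat.add_le_add_left (wdist_triangle π₂ onto₂ _ _ _) _
        _ ≤ (a - n) + (K₄ + (n - m)) := by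
            exact Nat.add_le_add b1 (Nat.add_le_add b2 b3)
        _ ≤ Kft + K₄ + 2 * C := by omega
  · push_neg at hna
    set j := n - a with hj
    have hn : n = a + j := by omega
    have s1 : wdist π₂ (evalW π₂ ((u₁' ++ u₂').take n)) (evalW π₂ (u₃'.take (m + j))) ≤ K₄ := by
      rw [hn]; exact stepB j
    have s2 : wdist π₂ (evalW π₂ (u₃'.take (m + j))) (evalW π₂ (u₃'.take n)) ≤ C := by
      rcases le_total (m + j) n with h | h
      · calc wdist π₂ (evalW π₂ (u₃'.take (m + j))) (evalW π₂ (u₃'.take n)) ≤ n - (m + j) :=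
              wdist_take_le π₂ _ h
          _ ≤ C := le_trans (by omega) (hdelta2 (by omega))
      · have ham : a ≤ m := by omega
        rw [wdist_symm π₂ onto₂]
        calc wdist π₂ (evalW π₂ (u₃'.take n)) (evalW π₂ (u₃'.take (m + j))) ≤ (m + j) - n :=
              wdist_take_le π₂ _ h
          _ ≤ C := le_trans (by omega) (hdelta1 ham)
    calc wdist π₂ (evalW π₂ ((u₁' ++ u₂').take n)) (evalW π₂ (u₃'.take n))
        ≤ wdist π₂ (evalW π₂ ((u₁' ++ u₂').take n)) (evalW π₂ (u₃'.take (m + j))) +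
          wdist π₂ (evalW π₂ (u₃'.take (m + j))) (evalW π₂ (u₃'.take n)) :=
          wdist_triangle π₂ onto₂ _ _ _
      _ ≤ K₄ + C := Nat.add_le_add s1 s2
      _ ≤ Kft + K₄ + 2 * C := by omega
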